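/- Let X, Y be Banach spaces, 1 ≤ p < q < ∞, and Z a nontrivial finite-dimensional Banach space. If there exists T ∈ L(X,Y) with m(T) > 0 that does not attain its minimum modulus, then the operator S : X ⊕_p Z → Y ⊕_q Z, S(x,z) = (Tx/m(T), z), satisfies m(S) = 2^{(p−q)/(pq)} and S does not attain its minimum modulus; consequently the pair (X ⊕_p Z, Y ⊕_q Z) fails the compact perturbation property for minimum modulus. -/

import Mathlib

open Filter Topology

noncomputable def minMod {X Y : Type*} [NormedAddCommGroup X] [NormedSpace ℝ X]
    [NormedAddCommGroup Y] [NormedSpace ℝ Y] (T : X →L[ℝ] Y) : ℝ :=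
  sInf {r : ℝ | ∃ x : X, ‖x‖ = 1 ∧ ‖T x‖ = r}

def WeaklyNull {X : Type*} [NormedAddCommGroup X] [NormedSpace ℝ X] (x : ℕ → X) : Prop :=
  ∀ f : X →L[ℝ] ℝ, Tendsto (fun n => f (x n)) atTop (𝓝 0)

def AttainsMinMod {X Y : Type*} [NormedAddCommGroup X] [NormedSpace ℝ X]
    [NormedAddCommGroup Y] [NormedSpace ℝ Y] (T : X →L[ℝ] Y) : Prop :=
  ∃ x : X, ‖x‖ = 1 ∧ ‖T x‖ = minMod T

def PairPropM (X Y : Type*) [NormedAddCommGroup X] [NormedSpace ℝ X]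
    [NormedAddCommGroup Y] [NormedSpace ℝ Y] : Prop :=
  ∀ T : X →L[ℝ] Y, 1 ≤ minMod T →
    ∀ (x : X) (y : Y), ‖x‖ ≤ ‖y‖ → ∀ xs : ℕ → X, WeaklyNull xs →
      limsup (fun n => ‖x + xs n‖) atTop ≤ limsup (fun n => ‖y + T (xs n)‖) atTop

def PairPropO (X Y : Type*) [NormedAddCommGroup X] [NormedSpace ℝ X]
    [NormedAddCommGroup Y] [NormedSpace ℝ Y] : Prop :=
  ∀ T : X →L[ℝ] Y, 1 ≤ minMod T →
    ∀ y : Y, y ≠ 0 → ∀ xs : ℕ → X, WeaklyNull xs →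
      limsup (fun n => ‖xs n‖) atTop < limsup (fun n => ‖y + T (xs n)‖) atTop

def PropertyM (X : Type*) [NormedAddCommGroup X] [NormedSpace ℝ X] : Prop :=
  ∀ x y : X, ‖y‖ ≤ ‖x‖ → ∀ xs : ℕ → X, WeaklyNull xs →
    limsup (fun n => ‖y + xs n‖) atTop ≤ limsup (fun n => ‖x + xs n‖) atTop

def OpialProperty (X : Type*) [NormedAddCommGroup X] [NormedSpace ℝ X] : Prop :=
  ∀ x : X, x ≠ 0 → ∀ xs : ℕ → X, WeaklyNull xs →
    limsup (fun n => ‖xs n‖) atTop < limsup (fun n => ‖x + xs n‖) atTop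

def WeakMinimizingProperty (X Y : Type*) [NormedAddCommGroup X] [NormedSpace ℝ X]
    [NormedAddCommGroup Y] [NormedSpace ℝ Y] : Prop :=
  ∀ T : X →L[ℝ] Y,
    (∃ xs : ℕ → X, (∀ n, ‖xs n‖ = 1) ∧
      Tendsto (fun n => ‖T (xs n)‖) atTop (𝓝 (minMod T)) ∧ ¬ WeaklyNull xs) →
    AttainsMinMod T

open scoped ENNReal

/-! Normalising `T` to `T' = m(T)⁻¹ • T` gives `m(T') = 1` and `‖x‖ < ‖T' x‖` for `x ≠ 0`.
For a unit vector `w = (x, z)` of `X ⊕_p Z` the power-mean inequality yields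
`‖S w‖ ≥ (‖x‖ ^ q + ‖z‖ ^ q) ^ (1/q) ≥ 2 ^ (1/q - 1/p)`, with strict inequality: if `x ≠ 0` because
`‖x‖ < ‖T' x‖`, and if `x = 0` because `S` is isometric on `Z`. The vectors `2 ^ (-1/p) • (x, z)`
with `‖x‖ = ‖z‖ = 1` and `‖T' x‖ → 1` show that `2 ^ (1/q - 1/p)` is the minimum modulus.
Replacing `id_Z` by `c • id_Z` is a compact perturbation, as `Z` is finite-dimensional; for large
`c` it raises the minimum modulus to any given `s < 1` (either `‖x‖ ≥ s`, or `‖z‖` is bounded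
below), in particular above `2 ^ (1/q - 1/p)`. -/

open scoped NNReal

section MinMod

variable {X Y : Type*} [NormedAddCommGroup X] [NormedSpace ℝ X]
  [NormedAddCommGroup Y] [NormedSpace ℝ Y]

lemma bddBelow_minMod_set (T : X →L[ℝ] Y) :
    BddBelow {r : ℝ | ∃ x : X, ‖x‖ = 1 ∧ ‖T x‖ = r} :=
  ⟨0, fun _ ⟨_, _, hr⟩ ↦ hr ▸ norm_nonneg _⟩

lemma minMod_le_norm_apply (T : X →L[ℝ] Y) {x : X} (hx : ‖x‖ = 1) : minMod T ≤ ‖T x‖ :=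
  csInf_le (bddBelow_minMod_set T) ⟨x, hx, rfl⟩

lemma le_minMod [Nontrivial X] {T : X →L[ℝ] Y} {c : ℝ} (h : ∀ x : X, ‖x‖ = 1 → c ≤ ‖T x‖) :
    c ≤ minMod T := by
  obtain ⟨x, hx⟩ := exists_norm_eq X zero_le_one
  exact le_csInf ⟨_, x, hx, rfl⟩ fun _ ⟨y, hy, hr⟩ ↦ hr ▸ h y hy

lemma exists_norm_apply_lt_minMod_add {T : X →L[ℝ] Y} (hT : 0 < minMod T) {ε : ℝ} (hε : 0 < ε) :
    ∃ x : X, ‖x‖ = 1 ∧ ‖T x‖ < minMod T + ε := by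
  have hne : {r : ℝ | ∃ x : X, ‖x‖ = 1 ∧ ‖T x‖ = r}.Nonempty := by
    by_contra h
    rw [Set.not_nonempty_iff_eq_empty] at h
    rw [minMod, h, Real.sInf_empty] at hT
    exact hT.false
  obtain ⟨_, ⟨x, hx, rfl⟩, hlt⟩ := exists_lt_of_csInf_lt hne (lt_add_of_pos_right (minMod T) hε)
  exact ⟨x, hx, hlt⟩

lemma minMod_mul_norm_le (T : X →L[ℝ] Y) (x : X) : minMod T * ‖x‖ ≤ ‖T x‖ := by
  rcases eq_or_ne x 0 with rfl | hx
  · simp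
  have hx' : 0 < ‖x‖ := norm_pos_iff.2 hx
  have hu : ‖‖x‖⁻¹ • x‖ = 1 := norm_smul_inv_norm (𝕜 := ℝ) hx
  have h := minMod_le_norm_apply T hu
  rwa [map_smul, norm_smul, norm_inv, norm_norm, inv_mul_eq_div, le_div_iff₀ hx'] at h

lemma minMod_mul_norm_lt {T : X →L[ℝ] Y} (hT : ¬ AttainsMinMod T) {x : X} (hx : x ≠ 0) :
    minMod T * ‖x‖ < ‖T x‖ := by
  have hx' : 0 < ‖x‖ := norm_pos_iff.2 hx
  have hu : ‖‖x‖⁻¹ • x‖ = 1 := norm_smul_inv_norm (𝕜 := ℝ) hx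
  have h : minMod T < ‖T (‖x‖⁻¹ • x)‖ :=
    (minMod_le_norm_apply T hu).lt_of_ne fun h ↦ hT ⟨_, hu, h.symm⟩
  rwa [map_smul, norm_smul, norm_inv, norm_norm, inv_mul_eq_div, lt_div_iff₀ hx'] at h

lemma minMod_smul (T : X →L[ℝ] Y) {c : ℝ} (hc : 0 ≤ c) : minMod (c • T) = c * minMod T := by
  rw [minMod, minMod, ← smul_eq_mul, ← Real.sInf_smul_of_nonneg hc]
  congr 1
  ext r
  simp only [Set.mem_ofPred_eq, Set.mem_smul_set, smul_apply, norm_smul,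
    Real.norm_of_nonneg hc, smul_eq_mul]
  constructor
  · rintro ⟨x, hx, rfl⟩
    exact ⟨_, ⟨x, hx, rfl⟩, rfl⟩
  · rintro ⟨_, ⟨x, hx, rfl⟩, rfl⟩
    exact ⟨x, hx, rfl⟩

lemma attainsMinMod_smul_iff (T : X →L[ℝ] Y) {c : ℝ} (hc : 0 < c) :
    AttainsMinMod (c • T) ↔ AttainsMinMod T := by
  simp only [AttainsMinMod, minMod_smul T hc.le, smul_apply, norm_smul,
    Real.norm_of_nonneg hc.le, mul_right_inj' hc.ne']

lemma sSup_minMod_add_compact_ne {S K : X →L[ℝ] Y} (hK : IsCompactOperator K)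
    (hS : 0 < minMod S) (hlt : minMod S < minMod (S + K)) :
    sSup {r : ℝ | ∃ K : X →L[ℝ] Y, IsCompactOperator K ∧ r = minMod (S + K)} ≠ minMod S := by
  intro h
  by_cases hbdd : BddAbove {r : ℝ | ∃ K : X →L[ℝ] Y, IsCompactOperator K ∧ r = minMod (S + K)}
  · exact (le_csSup hbdd ⟨K, hK, rfl⟩).not_gt (h ▸ hlt)
  · rw [Real.sSup_of_not_bddAbove hbdd] at h
    exact hS.ne h

lemma norm_le_norm_apply_of_one_le_minMod {T : X →L[ℝ] Y} (hT : 1 ≤ minMod T) (x : X) :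
    ‖x‖ ≤ ‖T x‖ :=
  (le_mul_of_one_le_left (norm_nonneg x) hT).trans (minMod_mul_norm_le T x)

end MinMod

section RealInequalities

lemma two_rpow_le_rpow_add_rpow {p q a b : ℝ} (hp : 0 < p) (hpq : p ≤ q) (ha : 0 ≤ a)
    (hb : 0 ≤ b) (hab : a ^ p + b ^ p = 1) :
    (2 : ℝ) ^ (1 / q - 1 / p) ≤ (a ^ q + b ^ q) ^ (1 / q) := by
  have hq : 0 < q := hp.trans_le hpq
  have hr : 1 ≤ q / p := (one_le_div hp).2 hpq
  have hpow : ∀ x : ℝ, 0 ≤ x → (x ^ p) ^ (q / p) = x ^ q := fun x hx ↦ by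
    rw [← Real.rpow_mul hx, mul_div_cancel₀ q hp.ne']
  -- power-mean inequality with exponent `q / p ≥ 1`, applied to `a ^ p` and `b ^ p`
  have hmean : (1 : ℝ) ≤ 2 ^ (q / p - 1) * (a ^ q + b ^ q) := by
    lift a to ℝ≥0 using ha
    lift b to ℝ≥0 using hb
    have h := NNReal.coe_le_coe.2 (NNReal.rpow_add_le_mul_rpow_add_rpow (a ^ p) (b ^ p) hr)
    push_cast at h hab
    rwa [hab, Real.one_rpow, hpow a a.2, hpow b b.2] at h
  have hsum : (2 : ℝ) ^ (1 - q / p) ≤ a ^ q + b ^ q := by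
    rwa [← neg_sub, Real.rpow_neg zero_le_two, inv_le_iff_one_le_mul₀' (by positivity)]
  calc (2 : ℝ) ^ (1 / q - 1 / p) = ((2 : ℝ) ^ (1 - q / p)) ^ (1 / q) := by
        rw [← Real.rpow_mul zero_le_two]
        congr 1
        field_simp
    _ ≤ (a ^ q + b ^ q) ^ (1 / q) := by gcongr

lemma two_rpow_one_div_sub_one_div_lt_one {p q : ℝ} (hp : 0 < p) (hpq : p < q) :
    (2 : ℝ) ^ (1 / q - 1 / p) < 1 :=
  Real.rpow_lt_one_of_one_lt_of_neg one_lt_two (sub_neg.2 (one_div_lt_one_div_of_lt hp hpq))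

lemma rpow_add_self_rpow_one_div {q u : ℝ} (hq : q ≠ 0) (hu : 0 ≤ u) :
    (u ^ q + u ^ q) ^ (1 / q) = 2 ^ (1 / q) * u := by
  rw [← two_mul, Real.mul_rpow zero_le_two (by positivity), ← Real.rpow_mul hu,
    mul_one_div_cancel hq, Real.rpow_one]

lemma exists_le_max_mul_of_rpow_add_rpow_eq_one {p s : ℝ} (hp : 0 < p) (hs0 : 0 ≤ s)
    (hs1 : s < 1) :
    ∃ c : ℝ, 0 ≤ c ∧ ∀ a b : ℝ, 0 ≤ a → 0 ≤ b → a ^ p + b ^ p = 1 → s ≤ max a (c * b) := by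
  have hβ : 0 < 1 - s ^ p := sub_pos.2 (Real.rpow_lt_one hs0 hs1 hp)
  refine ⟨s / (1 - s ^ p) ^ (1 / p), by positivity, fun a b ha hb hab ↦ ?_⟩
  rcases le_or_gt s a with hsa | has
  · exact le_max_of_le_left hsa
  have hb' : (1 - s ^ p) ^ (1 / p) ≤ b := by
    have : 1 - s ^ p ≤ b ^ p := by linarith [Real.rpow_le_rpow ha has.le hp.le]
    calc (1 - s ^ p) ^ (1 / p) ≤ (b ^ p) ^ (1 / p) := by gcongr
      _ = b := by rw [← Real.rpow_mul hb, mul_one_div_cancel hp.ne', Real.rpow_one]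
  refine le_max_of_le_right ?_
  rw [div_mul_eq_mul_div, le_div_iff₀ (by positivity)]
  exact mul_le_mul_of_nonneg_left hb' hs0

end RealInequalities

section LpProdMap

variable (p q : ℝ≥0∞)
  {X Y Z W : Type*} [NormedAddCommGroup X] [NormedSpace ℝ X]
  [NormedAddCommGroup Y] [NormedSpace ℝ Y] [NormedAddCommGroup Z] [NormedSpace ℝ Z]
  [NormedAddCommGroup W] [NormedSpace ℝ W]

noncomputable def lpProdMap (A : X →L[ℝ] Y) (B : Z →L[ℝ] W) :
    WithLp p (X × Z) →L[ℝ] WithLp q (Y × W) :=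
  ((WithLp.prodContinuousLinearEquiv q ℝ Y W).symm : Y × W →L[ℝ] WithLp q (Y × W)) ∘L
    A.prodMap B ∘L (WithLp.prodContinuousLinearEquiv p ℝ X Z : WithLp p (X × Z) →L[ℝ] X × Z)

variable {p q}

@[simp]
lemma lpProdMap_apply (A : X →L[ℝ] Y) (B : Z →L[ℝ] W) (w : WithLp p (X × Z)) :
    lpProdMap p q A B w = WithLp.toLp q (A w.fst, B w.snd) :=
  rfl

lemma lpProdMap_add [Fact (1 ≤ p)] [Fact (1 ≤ q)] (A A' : X →L[ℝ] Y) (B B' : Z →L[ℝ] W) :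
    lpProdMap p q A B + lpProdMap p q A' B' = lpProdMap p q (A + A') (B + B') :=
  rfl

lemma isCompactOperator_lpProdMap_zero [Fact (1 ≤ p)] [Fact (1 ≤ q)] [FiniteDimensional ℝ W]
    (B : Z →L[ℝ] W) : IsCompactOperator (lpProdMap p q (0 : X →L[ℝ] Y) B) := by
  have hB : IsCompactOperator (B ∘L WithLp.sndL p ℝ X Z) :=
    isCompactOperator_of_locallyCompactSpace_dom _
  -- `lpProdMap p q 0 B` unfolds to `toLp q ∘ inr ∘ B ∘ snd`
  exact hB.clm_comp (((WithLp.prodContinuousLinearEquiv q ℝ Y W).symm :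
    Y × W →L[ℝ] WithLp q (Y × W)) ∘L ContinuousLinearMap.inr ℝ Y W)

lemma norm_lpProdMap_apply (hq : 0 < q.toReal) (A : X →L[ℝ] Y) (B : Z →L[ℝ] W)
    (w : WithLp p (X × Z)) :
    ‖lpProdMap p q A B w‖ = (‖A w.fst‖ ^ q.toReal + ‖B w.snd‖ ^ q.toReal) ^ (1 / q.toReal) := by
  rw [WithLp.prod_norm_eq_add hq]
  rfl

end LpProdMap

lemma WithLp.prod_norm_rpow_eq_add {p : ℝ≥0∞} {X Z : Type*}
    [NormedAddCommGroup X] [NormedAddCommGroup Z] (hp : 0 < p.toReal) (w : WithLp p (X × Z)) :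
    ‖w‖ ^ p.toReal = ‖w.fst‖ ^ p.toReal + ‖w.snd‖ ^ p.toReal := by
  rw [WithLp.prod_norm_eq_add hp, ← Real.rpow_mul (by positivity), one_div_mul_cancel hp.ne',
    Real.rpow_one]

section Counterexample

variable {p q : ℝ≥0∞}
  {X Y Z : Type*} [NormedAddCommGroup X] [NormedSpace ℝ X]
  [NormedAddCommGroup Y] [NormedSpace ℝ Y] [NormedAddCommGroup Z] [NormedSpace ℝ Z]
  {T : X →L[ℝ] Y}

lemma lt_norm_lpProdMap_id_apply [Fact (1 ≤ p)] (hp : 0 < p.toReal) (hpq : p.toReal < q.toReal)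
    (hT : 1 ≤ minMod T) (hTna : ¬ AttainsMinMod T) {w : WithLp p (X × Z)} (hw : ‖w‖ = 1) :
    (2 : ℝ) ^ (1 / q.toReal - 1 / p.toReal) < ‖lpProdMap p q T (.id ℝ Z) w‖ := by
  have hq : 0 < q.toReal := hp.trans hpq
  have hunit : ‖w.fst‖ ^ p.toReal + ‖w.snd‖ ^ p.toReal = 1 := by
    rw [← WithLp.prod_norm_rpow_eq_add hp, hw, Real.one_rpow]
  rw [norm_lpProdMap_apply hq, ContinuousLinearMap.id_apply]
  rcases eq_or_ne w.fst 0 with h0 | h0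
  · have hb : ‖w.snd‖ = 1 := by
      rw [h0, norm_zero, Real.zero_rpow hp.ne', zero_add, ← Real.one_rpow p.toReal] at hunit
      exact (Real.rpow_left_inj (norm_nonneg _) zero_le_one hp.ne').1 hunit
    rw [h0, map_zero, norm_zero, hb, Real.zero_rpow hq.ne', zero_add, Real.one_rpow,
      Real.one_rpow]
    exact two_rpow_one_div_sub_one_div_lt_one hp hpq
  · have hlt : ‖w.fst‖ < ‖T w.fst‖ :=
      (le_mul_of_one_le_left (norm_nonneg _) hT).trans_lt (minMod_mul_norm_lt hTna h0)
    calc (2 : ℝ) ^ (1 / q.toReal - 1 / p.toReal)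
        ≤ (‖w.fst‖ ^ q.toReal + ‖w.snd‖ ^ q.toReal) ^ (1 / q.toReal) :=
          two_rpow_le_rpow_add_rpow hp hpq.le (norm_nonneg _) (norm_nonneg _) hunit
      _ < (‖T w.fst‖ ^ q.toReal + ‖w.snd‖ ^ q.toReal) ^ (1 / q.toReal) := by gcongr

lemma minMod_lpProdMap_id_le [Fact (1 ≤ p)] [Fact (1 ≤ q)] [Nontrivial Z] (hp : 0 < p.toReal)
    (hq : 0 < q.toReal) (hT0 : 0 < minMod T) (hT1 : minMod T ≤ 1) :
    minMod (lpProdMap p q T (.id ℝ Z)) ≤ 2 ^ (1 / q.toReal - 1 / p.toReal) := by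
  set t : ℝ := 2 ^ (1 / q.toReal - 1 / p.toReal)
  have ht : 0 < t := by positivity
  obtain ⟨z, hz⟩ := exists_norm_eq Z zero_le_one
  -- `c` normalises `(x, z)` with `‖x‖ = ‖z‖ = 1` in the `p`-norm
  set c : ℝ := 2 ^ (-(1 / p.toReal))
  have hc : 0 < c := by positivity
  have hct : 2 ^ (1 / q.toReal) * c = t := by
    rw [← Real.rpow_add two_pos, ← sub_eq_add_neg]
  refine le_of_forall_pos_le_add fun ε hε ↦ ?_
  obtain ⟨x, hx, hTx⟩ := exists_norm_apply_lt_minMod_add hT0 (div_pos hε ht)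
  have hTcx : ‖T (c • x)‖ ≤ (1 + ε / t) * c := by
    rw [map_smul, norm_smul, Real.norm_of_nonneg hc.le, mul_comm]
    gcongr
    linarith
  have hcz : ‖c • z‖ ≤ (1 + ε / t) * c := by
    rw [norm_smul, hz, Real.norm_of_nonneg hc.le, mul_one]
    exact le_mul_of_one_le_left hc.le (by linarith [div_pos hε ht])
  have hw : ‖WithLp.toLp p (c • x, c • z)‖ = 1 := by
    rw [WithLp.prod_norm_eq_add hp, WithLp.toLp_fst, WithLp.toLp_snd, norm_smul, norm_smul, hx,
      hz, Real.norm_of_nonneg hc.le, mul_one, rpow_add_self_rpow_one_div hp.ne' hc.le,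
      ← Real.rpow_add two_pos, add_neg_cancel, Real.rpow_zero]
  calc minMod (lpProdMap p q T (.id ℝ Z))
      ≤ ‖lpProdMap p q T (.id ℝ Z) (WithLp.toLp p (c • x, c • z))‖ := minMod_le_norm_apply _ hw
    _ = (‖T (c • x)‖ ^ q.toReal + ‖c • z‖ ^ q.toReal) ^ (1 / q.toReal) :=
        norm_lpProdMap_apply hq _ _ _
    _ ≤ (((1 + ε / t) * c) ^ q.toReal + ((1 + ε / t) * c) ^ q.toReal) ^ (1 / q.toReal) := by
        gcongr
    _ = t + ε := by
        rw [rpow_add_self_rpow_one_div hq.ne' (by positivity), mul_left_comm, hct]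
        field_simp

variable [Fact (1 ≤ p)] [Fact (1 ≤ q)] [Nontrivial Z]

lemma minMod_lpProdMap_id (hp : 0 < p.toReal) (hpq : p.toReal < q.toReal) (hT : minMod T = 1)
    (hTna : ¬ AttainsMinMod T) :
    minMod (lpProdMap p q T (.id ℝ Z)) = 2 ^ (1 / q.toReal - 1 / p.toReal) :=
  le_antisymm (minMod_lpProdMap_id_le hp (hp.trans hpq) (hT ▸ one_pos) hT.le)
    (le_minMod fun _ hw ↦ (lt_norm_lpProdMap_id_apply hp hpq hT.ge hTna hw).le)

lemma not_attainsMinMod_lpProdMap_id (hp : 0 < p.toReal) (hpq : p.toReal < q.toReal)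
    (hT : minMod T = 1) (hTna : ¬ AttainsMinMod T) :
    ¬ AttainsMinMod (lpProdMap p q T (.id ℝ Z)) := by
  rintro ⟨w, hw, hSw⟩
  have := lt_norm_lpProdMap_id_apply hp hpq hT.ge hTna hw
  rw [hSw, minMod_lpProdMap_id hp hpq hT hTna] at this
  exact this.false

lemma exists_le_minMod_lpProdMap_smul_id (hp : 0 < p.toReal) (hT : 1 ≤ minMod T) {s : ℝ}
    (hs0 : 0 ≤ s) (hs1 : s < 1) :
    ∃ c : ℝ, s ≤ minMod (lpProdMap p q T (c • .id ℝ Z)) := by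
  obtain ⟨c, hc0, hc⟩ := exists_le_max_mul_of_rpow_add_rpow_eq_one hp hs0 hs1
  refine ⟨c, le_minMod fun w hw ↦ ?_⟩
  have hunit : ‖w.fst‖ ^ p.toReal + ‖w.snd‖ ^ p.toReal = 1 := by
    rw [← WithLp.prod_norm_rpow_eq_add hp, hw, Real.one_rpow]
  have hfst : ‖w.fst‖ ≤ ‖lpProdMap p q T (c • .id ℝ Z) w‖ :=
    (norm_le_norm_apply_of_one_le_minMod hT _).trans
      (WithLp.norm_fst_le _ (lpProdMap p q T (c • .id ℝ Z) w))
  have hsnd : c * ‖w.snd‖ ≤ ‖lpProdMap p q T (c • .id ℝ Z) w‖ := by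
    simpa [norm_smul, Real.norm_of_nonneg hc0] using
      WithLp.norm_snd_le _ (lpProdMap p q T (c • .id ℝ Z) w)
  exact (hc _ _ (norm_nonneg _) (norm_nonneg _) hunit).trans (max_le hfst hsnd)

end Counterexample

theorem stmt17_general (p q : ℝ≥0∞) [Fact (1 ≤ p)] [Fact (1 ≤ q)]
    (hp : 1 ≤ p.toReal) (hpq : p.toReal < q.toReal)
    {X Y Z : Type*} [NormedAddCommGroup X] [NormedSpace ℝ X]
    [NormedAddCommGroup Y] [NormedSpace ℝ Y]
    [NormedAddCommGroup Z] [NormedSpace ℝ Z] [FiniteDimensional ℝ Z] [Nontrivial Z]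
    (T : X →L[ℝ] Y) (hT : 0 < minMod T) (hTna : ¬ AttainsMinMod T) :
    (∃ S : WithLp p (X × Z) →L[ℝ] WithLp q (Y × Z),
      (∀ w : WithLp p (X × Z),
        WithLp.equiv q (Y × Z) (S w) =
          ((minMod T)⁻¹ • T (WithLp.equiv p (X × Z) w).1, (WithLp.equiv p (X × Z) w).2)) ∧
      minMod S = 2 ^ ((p.toReal - q.toReal) / (p.toReal * q.toReal)) ∧
      ¬ AttainsMinMod S) ∧
    ¬ (∀ S : WithLp p (X × Z) →L[ℝ] WithLp q (Y × Z), ¬ AttainsMinMod S →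
        sSup {r : ℝ | ∃ K : WithLp p (X × Z) →L[ℝ] WithLp q (Y × Z),
          IsCompactOperator ⇑K ∧ r = minMod (S + K)} = minMod S) := by
  have hp0 : 0 < p.toReal := one_pos.trans_le hp
  set T' := (minMod T)⁻¹ • T
  have hT' : minMod T' = 1 := by rw [minMod_smul T (inv_nonneg.2 hT.le), inv_mul_cancel₀ hT.ne']
  have hT'na : ¬ AttainsMinMod T' := by rwa [attainsMinMod_smul_iff T (inv_pos.2 hT)]
  set S := lpProdMap p q T' (.id ℝ Z)
  have hS : minMod S = 2 ^ (1 / q.toReal - 1 / p.toReal) := minMod_lpProdMap_id hp0 hpq hT' hT'na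
  have hSna : ¬ AttainsMinMod S := not_attainsMinMod_lpProdMap_id hp0 hpq hT' hT'na
  have hexp : (p.toReal - q.toReal) / (p.toReal * q.toReal) = 1 / q.toReal - 1 / p.toReal := by
    have hq0 : q.toReal ≠ 0 := (hp0.trans hpq).ne'
    field_simp
  refine ⟨⟨S, fun w ↦ rfl, by rw [hS, hexp], hSna⟩, fun H ↦ ?_⟩
  have hS0 : 0 < minMod S := hS ▸ by positivity
  have hS1 : minMod S < 1 := hS ▸ two_rpow_one_div_sub_one_div_lt_one hp0 hpq
  obtain ⟨c, hc⟩ := exists_le_minMod_lpProdMap_smul_id (q := q) (Z := Z) hp0 hT'.ge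
    (s := (minMod S + 1) / 2) (by linarith) (by linarith)
  have hSK : S + lpProdMap p q 0 ((c - 1) • .id ℝ Z) = lpProdMap p q T' (c • .id ℝ Z) := by
    rw [lpProdMap_add, add_zero]
    congr 1
    module
  refine sSup_minMod_add_compact_ne (isCompactOperator_lpProdMap_zero ((c - 1) • .id ℝ Z)) hS0
    ?_ (H S hSna)
  rw [hSK]
  linarith

theorem stmt17 (p q : ℝ≥0∞) [Fact (1 ≤ p)] [Fact (1 ≤ q)]
    (hp : 1 ≤ p.toReal) (hpq : p.toReal < q.toReal) (hp' : p ≠ ⊤) (hq' : q ≠ ⊤)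
    {X Y Z : Type*} [NormedAddCommGroup X] [NormedSpace ℝ X] [CompleteSpace X]
    [NormedAddCommGroup Y] [NormedSpace ℝ Y] [CompleteSpace Y]
    [NormedAddCommGroup Z] [NormedSpace ℝ Z] [FiniteDimensional ℝ Z] [Nontrivial Z]
    (T : X →L[ℝ] Y) (hT : 0 < minMod T) (hTna : ¬ AttainsMinMod T) :
    (∃ S : WithLp p (X × Z) →L[ℝ] WithLp q (Y × Z),
      (∀ w : WithLp p (X × Z),
        WithLp.equiv q (Y × Z) (S w) =
          ((minMod T)⁻¹ • T (WithLp.equiv p (X × Z) w).1, (WithLp.equiv p (X × Z) w).2)) ∧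
      minMod S = 2 ^ ((p.toReal - q.toReal) / (p.toReal * q.toReal)) ∧
      ¬ AttainsMinMod S) ∧
    ¬ (∀ S : WithLp p (X × Z) →L[ℝ] WithLp q (Y × Z), ¬ AttainsMinMod S →
        sSup {r : ℝ | ∃ K : WithLp p (X × Z) →L[ℝ] WithLp q (Y × Z),
          IsCompactOperator ⇑K ∧ r = minMod (S + K)} = minMod S) :=
  stmt17_general p q hp hpq T hT hTna
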